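/- arXiv:2403.02670 — 4 statements merged into one kernel-verified Lean document; each statement's English description precedes it below -/
import Mathlib

section
/- Let U_1,...,U_n be independent uniform random variables on [0,1] and S_n their sum. Then for every integer k ≥ 0, P(⌊S_n⌋ = k) = A(n,k)/n!, where A(n,k) is the Eulerian number. -/
/-!
For `x_i ∈ [0,1)` with partial sums `S_i`, every step `S_i ↦ S_{i+1}` raises `⌊·⌋` by `0` or `1`,
and by `1` exactly when the fractional part drops; so `⌊S_n⌋` is the number of descents of the
word `({S_1}, …, {S_n})`. On the torus `(ℝ/ℤ)ⁿ` the partial-sum map is a continuous surjective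
endomorphism, hence preserves Haar measure: for i.i.d. uniform `x_i` the word is again i.i.d.
uniform. Finally, an i.i.d. tuple from an atomless law has a.s. distinct entries, and by
exchangeability its sorting permutation is uniform on the `n!` permutations; the tuple has the
descents of the inverse of that permutation, so it has `k` descents with probability `A(n,k)/n!`.
-/

open MeasureTheory ProbabilityTheory Finset
open scoped ENNReal

/-- The set of descents of a permutation of `Fin n`. -/
def descentSet {n : ℕ} (σ : Equiv.Perm (Fin n)) : Finset (Fin n) :=
  Finset.univ.filter (fun i => ∃ h : (i : ℕ) + 1 < n, σ ⟨(i : ℕ) + 1, h⟩ < σ i)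

/-- The Eulerian number `A(n,k)`: permutations of length `n` with exactly `k` descents. -/
def eulerian (n k : ℕ) : ℕ :=
  (Finset.univ.filter (fun σ : Equiv.Perm (Fin n) => (descentSet σ).card = k)).card

open scoped Nat

section Descents

variable {n : ℕ} {α β : Type*} [LinearOrder α] [LinearOrder β]

def descents (w : Fin n → α) : Finset (Fin n) :=
  {i | ∃ h : (i : ℕ) + 1 < n, w ⟨i + 1, h⟩ < w i}

theorem descentSet_eq_descents (σ : Equiv.Perm (Fin n)) : descentSet σ = descents σ := rfl

theorem StrictMono.descents_comp {f : α → β} (hf : StrictMono f) (w : Fin n → α) :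
    descents (f ∘ w) = descents w := by
  simp [descents, hf.lt_iff_lt]

theorem card_descents_eq_card_filter_range (f : ℕ → α) (m : ℕ) :
    #(descents fun i : Fin (m + 1) => f i) = #{i ∈ range m | f (i + 1) < f i} := by
  rw [descents, card_filter, card_filter, Fin.sum_univ_eq_sum_range
    (fun i => if ∃ _ : i + 1 < m + 1, f (i + 1) < f i then 1 else 0), sum_range_succ]
  simp only [exists_prop, Nat.add_lt_add_iff_right, lt_irrefl, false_and, if_false, add_zero]
  exact sum_congr rfl fun i hi => by simp [mem_range.mp hi]

end Descents

section PartialSums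

variable {M : Type*} {n : ℕ}

def partialSums [AddCommMonoid M] (n : ℕ) : (Fin n → M) →+ (Fin n → M) where
  toFun x i := ∑ j ∈ Iic i, x j
  map_zero' := by ext; simp
  map_add' x y := by ext; simp [sum_add_distrib]

theorem partialSums_apply [AddCommMonoid M] (x : Fin n → M) (i : Fin n) :
    partialSums n x i = ∑ j ∈ Iic i, x j := rfl

theorem partialSums_apply_val [AddCommMonoid M] (f : ℕ → M) (i : Fin n) :
    partialSums n (fun j => f j) i = ∑ j ∈ range (i + 1), f j := by
  rw [partialSums_apply, Nat.range_succ_eq_Iic, ← Fin.map_valEmbedding_Iic, sum_map]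
  rfl

theorem partialSums_surjective [AddCommGroup M] :
    Function.Surjective (partialSums n : (Fin n → M) → (Fin n → M)) := by
  intro z
  set Z : ℕ → M := Function.extend Fin.val z 0
  have hZ (i : Fin n) : Z i = z i := Fin.val_injective.extend_apply z 0 i
  let X : ℕ → M := fun
    | 0 => Z 0
    | j + 1 => Z (j + 1) - Z j
  refine ⟨fun i => X i, funext fun i => ?_⟩
  rw [partialSums_apply_val, sum_range_succ', ← hZ, eq_sum_range_sub Z i, add_comm]

theorem continuous_partialSums [AddCommMonoid M] [TopologicalSpace M] [ContinuousAdd M] :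
    Continuous (partialSums n : (Fin n → M) → (Fin n → M)) :=
  continuous_pi fun _ => continuous_finsetSum _ fun j _ => continuous_apply j

end PartialSums

section FloorFract

variable {R : Type*} [CommRing R] [LinearOrder R] [IsStrictOrderedRing R] [FloorRing R]

theorem Int.floor_add_of_mem_Ico (a : R) {t : R} (ht : t ∈ Set.Ico 0 1) :
    ⌊a + t⌋ = ⌊a⌋ + if Int.fract (a + t) < Int.fract a then 1 else 0 := by
  obtain ⟨ht0, ht1⟩ := ht
  have hsplit : a + t = ⌊a⌋ + (Int.fract a + t) := by rw [← add_assoc, Int.floor_add_fract]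
  rw [hsplit, Int.floor_intCast_add, Int.fract_intCast_add]
  have := Int.fract_nonneg a
  have := Int.fract_lt_one a
  by_cases hc : Int.fract a + t < 1
  · rw [Int.floor_eq_zero_iff.mpr ⟨by linarith, hc⟩, Int.fract_eq_self.mpr ⟨by linarith, hc⟩,
      if_neg (by linarith)]
  · push Not at hc
    have hfl : ⌊Int.fract a + t⌋ = 1 := by
      rw [Int.floor_eq_iff]; push_cast; constructor <;> linarith
    have hfr : Int.fract (Int.fract a + t) = Int.fract a + t - 1 := by
      rw [Int.fract, hfl]; push_cast; ring
    rw [hfl, hfr, if_pos (by linarith)]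

theorem Int.floor_eq_floor_zero_add_card_fract_descents (s : ℕ → R) (m : ℕ)
    (hs : ∀ i < m, s (i + 1) - s i ∈ Set.Ico 0 1) :
    ⌊s m⌋ = ⌊s 0⌋ + #{i ∈ Finset.range m | Int.fract (s (i + 1)) < Int.fract (s i)} := by
  induction m with
  | zero => simp
  | succ m ih =>
    have hstep := Int.floor_add_of_mem_Ico (s m) (hs m m.lt_add_one)
    rw [add_sub_cancel] at hstep
    rw [hstep, ih fun i hi => hs i (by omega), range_add_one, filter_insert]
    split_ifs with h <;> simp [h, card_insert_of_notMem, add_assoc]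

theorem floor_sum_eq_card_descents_fract_partialSums {n : ℕ} (x : Fin n → R)
    (hx : ∀ i, x i ∈ Set.Ico 0 1) :
    ⌊∑ i, x i⌋ = #(descents fun i => Int.fract (partialSums n x i)) := by
  cases n with
  | zero => simp [descents]
  | succ m =>
    set X : ℕ → R := Function.extend Fin.val x 0
    have hX (i : Fin (m + 1)) : X i = x i := Fin.val_injective.extend_apply x 0 i
    have hx' : x = fun i : Fin (m + 1) => X i := funext fun i => (hX i).symm
    set s : ℕ → R := fun k => ∑ j ∈ range (k + 1), X j
    have hs : ∀ i < m, s (i + 1) - s i ∈ Set.Ico 0 1 := fun i hi => by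
      simpa [s, sum_range_succ _ (i + 1), ← hX ⟨i + 1, by omega⟩] using hx ⟨i + 1, by omega⟩
    have hs0 : ⌊s 0⌋ = 0 := by
      simpa [s, ← hX 0, Int.floor_eq_zero_iff] using hx 0
    have hsum : ∑ i, x i = s m := by rw [hx', Fin.sum_univ_eq_sum_range (fun i => X i)]
    have hword : (fun i : Fin (m + 1) => Int.fract (partialSums (m + 1) x i)) =
        fun i : Fin (m + 1) => Int.fract (s i) := by
      rw [hx']; exact funext fun i => by rw [partialSums_apply_val]
    rw [hsum, hword, card_descents_eq_card_filter_range (fun k => Int.fract (s k)),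
      Int.floor_eq_floor_zero_add_card_fract_descents s m hs, hs0, zero_add]

end FloorFract

section SortRegion

variable {n : ℕ} {α : Type*} [LinearOrder α]

def sortRegion (σ : Equiv.Perm (Fin n)) : Set (Fin n → α) :=
  {x | StrictMono (x ∘ σ)}

theorem pairwise_disjoint_sortRegion :
    Pairwise (Function.onFun Disjoint (sortRegion : Equiv.Perm (Fin n) → Set (Fin n → α))) := by
  intro σ τ hστ
  refine Set.disjoint_left.mpr fun x hσ hτ => hστ ?_
  have hinj : Function.Injective x := by
    simpa using hσ.injective.comp (σ⁻¹).injective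
  have hrange : Set.range (x ∘ σ) = Set.range (x ∘ τ) := by
    rw [Set.range_comp, Set.range_comp, σ.range_eq_univ, τ.range_eq_univ]
  exact Equiv.ext fun i => hinj (congrFun ((hσ.range_inj hτ).mp hrange) i)

theorem mem_sortRegion_sort {x : Fin n → α} (hx : Function.Injective x) :
    x ∈ sortRegion (Tuple.sort x) :=
  (Tuple.monotone_sort x).strictMono_of_injective (hx.comp (Tuple.sort x).injective)

theorem descents_of_mem_sortRegion {σ : Equiv.Perm (Fin n)} {x : Fin n → α}
    (hx : x ∈ sortRegion σ) : descents x = descents ⇑σ⁻¹ := by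
  have hx' : x = (x ∘ σ) ∘ ⇑σ⁻¹ := by ext; simp
  conv_lhs => rw [hx']
  exact StrictMono.descents_comp hx _

end SortRegion

theorem measurePreserving_comp_perm {ι α : Type*} [Fintype ι] [MeasurableSpace α]
    (μ : Measure α) [SigmaFinite μ] (σ : Equiv.Perm ι) :
    MeasurePreserving (fun x : ι → α => x ∘ σ) (Measure.pi fun _ => μ) (Measure.pi fun _ => μ) := by
  convert measurePreserving_piCongrLeft (fun _ : ι => μ) σ.symm using 1
  ext x i
  simp [MeasurableEquiv.coe_piCongrLeft, Equiv.piCongrLeft_apply_eq_cast]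

section AtomlessLaw

variable {n : ℕ} (μ : Measure ℝ) [IsProbabilityMeasure μ] [NullSingletonClass μ]

theorem pi_setOf_apply_eq_apply {ι : Type*} [Fintype ι] {i j : ι} (hij : i ≠ j) :
    Measure.pi (fun _ : ι => μ) {x | x i = x j} = 0 := by
  have hdiag : MeasurableSet {p : ℝ × ℝ | p.1 = p.2} :=
    measurableSet_eq_fun measurable_fst measurable_snd
  have hind : IndepFun (fun x : ι → ℝ => x i) (fun x => x j) (Measure.pi fun _ => μ) :=
    (iIndepFun_pi (μ := fun _ : ι => μ) (X := fun _ => id) fun _ => aemeasurable_id).indepFun hij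
  rw [indepFun_iff_map_prod_eq_prod_map_map (measurable_pi_apply i).aemeasurable
    (measurable_pi_apply j).aemeasurable] at hind
  change Measure.pi _ ((fun x : ι → ℝ => (x i, x j)) ⁻¹' {p : ℝ × ℝ | p.1 = p.2}) = 0
  rw [← Measure.map_apply (by fun_prop) hdiag, hind, (measurePreserving_eval _ i).map_eq,
    (measurePreserving_eval _ j).map_eq, Measure.measure_prod_null hdiag]
  exact Filter.Eventually.of_forall fun a => by simp [Set.preimage]

theorem ae_injective_pi {ι : Type*} [Fintype ι] :
    ∀ᵐ x ∂Measure.pi (fun _ : ι => μ), Function.Injective x := by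
  simp only [Function.Injective, ae_all_iff]
  intro i j
  by_cases hij : i = j
  · exact Filter.Eventually.of_forall fun _ _ => hij
  · filter_upwards [measure_eq_zero_iff_ae_notMem.mp (pi_setOf_apply_eq_apply μ hij)]
      with x hx heq using absurd heq hx

theorem measurableSet_sortRegion (σ : Equiv.Perm (Fin n)) :
    MeasurableSet (sortRegion σ : Set (Fin n → ℝ)) := by
  have : (sortRegion σ : Set (Fin n → ℝ)) =
      ⋂ (i) (j) (_ : i < j), {x | x (σ i) < x (σ j)} := by
    ext x; simp [sortRegion, StrictMono]
  rw [this]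
  exact .iInter fun i => .iInter fun j => .iInter fun _ =>
    measurableSet_lt (measurable_pi_apply _) (measurable_pi_apply _)

/-- The `n!` regions are permuted by the coordinate permutations, which preserve the product
measure, and they tile almost all of `ℝⁿ`. -/
theorem pi_sortRegion (σ : Equiv.Perm (Fin n)) :
    Measure.pi (fun _ : Fin n => μ) (sortRegion σ) = (n ! : ℝ≥0∞)⁻¹ := by
  have hinj := ae_injective_pi (ι := Fin n) μ
  set P := Measure.pi fun _ : Fin n => μ
  have hperm (σ : Equiv.Perm (Fin n)) : P (sortRegion σ) = P (sortRegion 1) :=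
    (measurePreserving_comp_perm μ σ).measure_preimage
      (measurableSet_sortRegion 1).nullMeasurableSet
  have hcover : ∑ σ : Equiv.Perm (Fin n), P (sortRegion σ) = 1 := by
    rw [← measure_biUnion_finset (pairwise_disjoint_sortRegion.set_pairwise _)
      fun σ _ => measurableSet_sortRegion σ, ← measure_univ (μ := P)]
    have hnull : P {x | ¬ Function.Injective x} = 0 := ae_iff.mp hinj
    refine measure_congr (ae_eq_univ.mpr (measure_mono_null ?_ hnull))
    exact fun x hx hinj => hx (Set.mem_biUnion (mem_univ _) (mem_sortRegion_sort hinj))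
  rw [sum_congr rfl fun σ _ => hperm σ, sum_const, card_univ, Fintype.card_perm,
    Fintype.card_fin, nsmul_eq_mul] at hcover
  rw [hperm σ]
  exact ENNReal.eq_inv_of_mul_eq_one_left (by rwa [mul_comm])

theorem pi_setOf_card_descents_eq (k : ℕ) :
    Measure.pi (fun _ : Fin n => μ) {x | #(descents x) = k} = eulerian n k / n ! := by
  set S : Finset (Equiv.Perm (Fin n)) := {σ | #(descents ⇑σ⁻¹) = k}
  have hae : {x : Fin n → ℝ | #(descents x) = k} =ᵐ[Measure.pi fun _ => μ]
      ⋃ σ ∈ S, sortRegion σ := by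
    refine Filter.eventuallyEq_set.mpr ((ae_injective_pi μ).mono fun x hx => ?_)
    simp only [Set.mem_ofPred_eq, Set.mem_iUnion, exists_prop]
    constructor
    · intro h
      have hsort := mem_sortRegion_sort hx
      exact ⟨_, mem_filter.mpr ⟨mem_univ _, descents_of_mem_sortRegion hsort ▸ h⟩, hsort⟩
    · rintro ⟨τ, hτ, hxτ⟩
      simpa [S, descents_of_mem_sortRegion hxτ] using hτ
  have hS : #S = eulerian n k := by
    unfold eulerian
    exact card_equiv (Equiv.inv _) fun σ => by
      rw [mem_filter, mem_filter]
      simp [descentSet_eq_descents]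
  rw [measure_congr hae, measure_biUnion_finset (pairwise_disjoint_sortRegion.set_pairwise _)
    fun σ _ => measurableSet_sortRegion σ, sum_congr rfl fun σ _ => pi_sortRegion μ σ,
    sum_const, nsmul_eq_mul, hS, ENNReal.div_eq_inv_mul, mul_comm]

end AtomlessLaw

section UnitAddCircle

instance : IsProbabilityMeasure (volume.restrict (Set.Ico (0 : ℝ) 1)) := ⟨by simp⟩

theorem measurePreserving_coe_unitAddCircle :
    MeasurePreserving ((↑) : ℝ → UnitAddCircle) (volume.restrict (Set.Ico 0 1)) volume := by
  rw [Measure.restrict_congr_set Ico_ae_eq_Ioc]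
  simpa only [zero_add] using UnitAddCircle.measurePreserving_mk 0

theorem measurePreserving_coe_equivIco :
    MeasurePreserving (fun y : UnitAddCircle => (AddCircle.equivIco 1 0 y : ℝ)) volume
      (volume.restrict (Set.Ico 0 1)) := by
  have hmeas : Measurable fun y : UnitAddCircle => (AddCircle.equivIco 1 0 y : ℝ) :=
    measurable_subtype_coe.comp (AddCircle.measurableEquivIco 1 0).measurable
  refine ⟨hmeas, ?_⟩
  have hfract : Int.fract =ᵐ[volume.restrict (Set.Ico (0 : ℝ) 1)] id :=
    ae_restrict_of_forall_mem measurableSet_Ico fun t ht => Int.fract_eq_self.mpr ht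
  rw [← measurePreserving_coe_unitAddCircle.map_eq,
    Measure.map_map hmeas measurePreserving_coe_unitAddCircle.measurable]
  simp only [Function.comp_def, AddCircle.coe_equivIco_mk_apply, div_one, mul_one]
  rw [Measure.map_congr hfract, Measure.map_id]

end UnitAddCircle

/-- Lift to the torus `(ℝ/ℤ)ⁿ`, apply the Haar-measure-preserving partial-sum endomorphism, and
read off the representatives in `[0,1)`. -/
theorem measurePreserving_fract_partialSums (n : ℕ) :
    MeasurePreserving (fun x : Fin n → ℝ => fun i => Int.fract (partialSums n x i))
      (Measure.pi fun _ => volume.restrict (Set.Ico 0 1))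
      (Measure.pi fun _ => volume.restrict (Set.Ico 0 1)) := by
  have hcoe := measurePreserving_pi _ _ fun _ : Fin n => measurePreserving_coe_unitAddCircle
  have hsum : MeasurePreserving (partialSums n : (Fin n → UnitAddCircle) → _) :=
    AddMonoidHom.measurePreserving continuous_partialSums partialSums_surjective rfl
  have hrep := measurePreserving_pi _ _ fun _ : Fin n => measurePreserving_coe_equivIco
  convert hrep.comp (hsum.comp hcoe) using 1
  funext x i
  simp [partialSums_apply, ← QuotientAddGroup.mk_sum]

theorem measurableSet_card_descents {n : ℕ} (k : ℕ) :
    MeasurableSet {w : Fin n → ℝ | #(descents w) = k} := by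
  have : Measurable fun w : Fin n → ℝ => #(descents w) := by
    simp only [descents, card_filter]
    refine Finset.measurable_sum _ fun i _ => Measurable.ite ?_ measurable_const measurable_const
    by_cases h : (i : ℕ) + 1 < n
    · simpa [h] using measurableSet_lt (measurable_pi_apply (X := fun _ : Fin n => ℝ) _)
        (measurable_pi_apply i)
    · simp [h]
  exact this (measurableSet_singleton k)

theorem pi_setOf_floor_sum_eq (n k : ℕ) :
    Measure.pi (fun _ : Fin n => volume.restrict (Set.Ico (0 : ℝ) 1)) {x | ⌊∑ i, x i⌋ = k} =
      eulerian n k / n ! := by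
  set P := Measure.pi fun _ : Fin n => volume.restrict (Set.Ico (0 : ℝ) 1)
  have hIco : ∀ᵐ x ∂P, ∀ i, x i ∈ Set.Ico 0 1 := ae_all_iff.mpr fun i =>
    (measurePreserving_eval _ i).quasiMeasurePreserving.ae (ae_restrict_mem measurableSet_Ico)
  calc P {x | ⌊∑ i, x i⌋ = k}
      = P ((fun x i => Int.fract (partialSums n x i)) ⁻¹' {w | #(descents w) = k}) := by
        refine measure_congr (Filter.eventuallyEq_set.mpr (hIco.mono fun x hx => ?_))
        simp [floor_sum_eq_card_descents_fract_partialSums x hx]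
    _ = P {w | #(descents w) = k} :=
      (measurePreserving_fract_partialSums n).measure_preimage
        (measurableSet_card_descents k).nullMeasurableSet
    _ = eulerian n k / n ! := pi_setOf_card_descents_eq _ k

theorem floor_sum_uniform_eulerian_general
    {Ω : Type*} [MeasurableSpace Ω] {μ : Measure Ω}
    (n : ℕ) (U : ℕ → Ω → ℝ) (hmeas : ∀ i, Measurable (U i))
    (hindep : iIndepFun U μ)
    (hunif : ∀ i, μ.map (U i) = volume.restrict (Set.Icc (0 : ℝ) 1))
    (k : ℕ) :
    μ {ω | ⌊∑ i ∈ Finset.range n, U i ω⌋ = (k : ℤ)} =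
      (eulerian n k : ℝ≥0∞) / (Nat.factorial n : ℝ≥0∞) := by
  set F : Ω → Fin n → ℝ := fun ω i => U i ω
  have hF : Measurable F := measurable_pi_lambda _ fun i => hmeas i
  have hlaw : μ.map F = Measure.pi fun _ => volume.restrict (Set.Ico (0 : ℝ) 1) := by
    rw [(hindep.precomp Fin.val_injective).map_fun_eq_pi_map
      fun i : Fin n => (hmeas i).aemeasurable]
    simp [hunif, Measure.restrict_congr_set Ico_ae_eq_Icc]
  have hevent : {ω | ⌊∑ i ∈ range n, U i ω⌋ = k} = F ⁻¹' {x | ⌊∑ i, x i⌋ = k} := by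
    ext ω
    simp [F, Fin.sum_univ_eq_sum_range (fun i => U i ω)]
  have hmeasSet : MeasurableSet {x : Fin n → ℝ | ⌊∑ i, x i⌋ = k} :=
    (by fun_prop : Measurable fun x : Fin n → ℝ => ⌊∑ i, x i⌋) (measurableSet_singleton _)
  rw [hevent, ← Measure.map_apply hF hmeasSet, hlaw, pi_setOf_floor_sum_eq]

theorem floor_sum_uniform_eulerian
    {Ω : Type*} [MeasurableSpace Ω] {μ : Measure Ω} [IsProbabilityMeasure μ]
    (n : ℕ) (U : ℕ → Ω → ℝ) (hmeas : ∀ i, Measurable (U i))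
    (hindep : iIndepFun U μ)
    (hunif : ∀ i, μ.map (U i) = volume.restrict (Set.Icc (0 : ℝ) 1))
    (k : ℕ) :
    μ {ω | ⌊∑ i ∈ Finset.range n, U i ω⌋ = (k : ℤ)} =
      (eulerian n k : ℝ≥0∞) / (Nat.factorial n : ℝ≥0∞) :=
  floor_sum_uniform_eulerian_general n U hmeas hindep hunif k
end

section
/- Let U_1,...,U_n be any real numbers, let S_n be their sum and Ū = S_n/n their mean. Let U_(1) ≤ ... ≤ U_(n) be the sorted values and Δ_i = U_(i+1) − U_(i) for 1 ≤ i ≤ n−1 be the gaps. Define W̌_n = #{i ≤ n : U_i < Ū}. Then for every k with 0 ≤ k ≤ n−1, W̌_n ≤ k if and only if Σ_{j=1}^{k} j·Δ_j − Σ_{j=k+1}^{n−1} (n−j)·Δ_j ≥ 0. -/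
open Finset

/-! Summation by parts turns the weighted gap sum into `n * U_(k+1) - S_n`, so the condition says
that the mean is at most `U_(k+1)`. Since the `U_(i)` are sorted, this holds exactly when at most
`k` of the values lie strictly below the mean. -/

theorem sum_Icc_natCast_mul_sub (V : ℕ → ℝ) (m : ℕ) :
    ∑ j ∈ Icc 1 m, (j : ℝ) * (V (j + 1) - V j) = m * V (m + 1) - ∑ j ∈ range m, V (j + 1) := by
  induction m with
  | zero => simp
  | succ m ih =>
    rw [sum_Icc_succ_top (by omega), ih, sum_range_succ]
    push_cast
    ring

theorem sum_weighted_gaps_eq (V : ℕ → ℝ) {n k : ℕ} (hk : k < n) :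
    ∑ j ∈ Icc 1 k, (j : ℝ) * (V (j + 1) - V j)
        - ∑ j ∈ Icc (k + 1) (n - 1), ((n : ℝ) - j) * (V (j + 1) - V j)
      = n * V (k + 1) - ∑ j ∈ range n, V (j + 1) := by
  obtain ⟨m, rfl⟩ : ∃ m, n = m + 1 := Nat.exists_eq_add_one.mpr (by omega)
  have hsplit : ∑ j ∈ Icc 1 k, (j : ℝ) * (V (j + 1) - V j)
      + ∑ j ∈ Icc (k + 1) m, (j : ℝ) * (V (j + 1) - V j)
      = ∑ j ∈ Icc 1 m, (j : ℝ) * (V (j + 1) - V j) := by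
    simpa only [← Icc_add_one_left_eq_Ioc, zero_add] using
      sum_Ioc_consecutive _ (Nat.zero_le k) (Nat.le_of_lt_succ hk)
  have htele : ∑ j ∈ Icc (k + 1) m, (V (j + 1) - V j) = V (m + 1) - V (k + 1) := by
    rw [← Ico_add_one_right_eq_Icc, sum_Ico_sub _ (by omega)]
  simp only [Nat.add_sub_cancel, sub_mul, sum_sub_distrib, ← mul_sum, htele]
  rw [sum_range_succ]
  push_cast
  linear_combination hsplit + sum_Icc_natCast_mul_sub V m

theorem card_filter_lt_le_card_Iio_iff {α β : Type*} [LinearOrder α] [Fintype α]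
    [LocallyFiniteOrderBot α] [LinearOrder β] {w : α → β} (hw : Monotone w) (c : β) (k : α) :
    #{i | w i < c} ≤ #(Iio k) ↔ c ≤ w k := by
  constructor
  · intro h
    by_contra! hlt
    have hsub : Iic k ⊆ ({i | w i < c} : Finset α) := fun i hi => by
      simpa using (hw (mem_Iic.mp hi)).trans_lt hlt
    have hIio_lt_Iic : #(Iio k) < #(Iic k) := by
      classical
      rw [← Iio_insert, card_insert_of_notMem (by simp)]
      omega
    exact (hIio_lt_Iic.trans_le ((card_le_card hsub).trans h)).false
  · intro h
    refine card_le_card fun i hi => ?_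
    simp only [mem_filter, mem_univ, true_and, mem_Iio] at hi ⊢
    by_contra! hki
    exact (hi.trans_le (h.trans (hw hki))).false

theorem count_below_mean_le_iff
    (n : ℕ) (hn : 1 ≤ n) (U : Fin n → ℝ) (V Δ : ℕ → ℝ)
    -- `V 1 ≤ V 2 ≤ ... ≤ V n` is the increasing rearrangement of `U`:
    (hmono : ∀ i j, 1 ≤ i → i ≤ j → j ≤ n → V i ≤ V j)
    (hperm : ∃ σ : Equiv.Perm (Fin n), ∀ i : Fin n, V ((i : ℕ) + 1) = U (σ i))
    -- the gaps `Δ_j = V_(j+1) - V_(j)` for `1 ≤ j ≤ n-1`: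
    (hΔ : ∀ j, 1 ≤ j → j ≤ n - 1 → Δ j = V (j + 1) - V j)
    (k : ℕ) (hk : k ≤ n - 1) :
    (Finset.univ.filter (fun i : Fin n => U i < (∑ j, U j) / n)).card ≤ k ↔
      0 ≤ ∑ j ∈ Finset.Icc 1 k, (j : ℝ) * Δ j
        - ∑ j ∈ Finset.Icc (k + 1) (n - 1), ((n : ℝ) - j) * Δ j := by
  obtain ⟨σ, hσ⟩ := hperm
  have hkn : k < n := by omega
  set w : Fin n → ℝ := fun i => V (i + 1)
  have hw : Monotone w := fun i j hij => hmono _ _ (by omega) (by simpa using hij) (by omega)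
  have hsum : ∑ j, U j = ∑ j ∈ range n, V (j + 1) := by
    rw [← Equiv.sum_comp σ, ← Fin.sum_univ_eq_sum_range (fun j => V (j + 1))]
    simp only [hσ]
  have hcard (c : ℝ) : #{i | w i < c} = #{i | U i < c} := card_equiv σ fun i => by simp [w, hσ]
  have hgaps : ∑ j ∈ Icc 1 k, (j : ℝ) * Δ j - ∑ j ∈ Icc (k + 1) (n - 1), ((n : ℝ) - j) * Δ j
      = n * V (k + 1) - ∑ j ∈ range n, V (j + 1) := by
    rw [← sum_weighted_gaps_eq V hkn]
    congr 1 <;> refine sum_congr rfl fun j hj => ?_ <;> rw [hΔ j] <;> grind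
  calc #{i | U i < (∑ j, U j) / n} ≤ k
      ↔ #{i | w i < (∑ j, U j) / n} ≤ #(Iio (⟨k, hkn⟩ : Fin n)) := by rw [hcard, Fin.card_Iio]
    _ ↔ (∑ j, U j) / n ≤ V (k + 1) := card_filter_lt_le_card_Iio_iff hw _ _
    _ ↔ _ := by
      rw [hgaps, ← hsum, div_le_iff₀ (by positivity), sub_nonneg, mul_comm]
end

section
/- Let U_1,...,U_n be any real numbers with sorted values U_(1) ≤ ... ≤ U_(n) and gaps Δ_j = U_(j+1) − U_(j). Define W̌_n = #{i : U_i < mean}. Then W̌_n = min{ k ∈ {0,...,n−1} : Σ_{j=1}^k j·Δ_j ≥ Σ_{j=k+1}^{n−1} (n−j)·Δ_j }. -/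
/-!
Abel summation turns both sides into sums of the sorted values: for `k ≤ n - 1`,
`∑_{j ≤ k} j Δ_j - ∑_{j > k} (n - j) Δ_j = n V_(k+1) - ∑ V`. So the condition on `k` says
exactly that `V_(k+1)` is at least the mean, and since `V` is sorted the least such `k` is the
number of values below the mean.
-/

open Finset

section AbelSummation

variable {R : Type*} [CommRing R] (f : ℕ → R)

theorem sum_Icc_mul_sub_eq (k : ℕ) :
    ∑ j ∈ Icc 1 k, (j : R) * (f (j + 1) - f j) = k * f (k + 1) - ∑ j ∈ Icc 1 k, f j := by
  induction k with
  | zero => simp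
  | succ k ih =>
    rw [sum_Icc_succ_top (by omega), sum_Icc_succ_top (by omega), ih]
    push_cast
    ring

theorem sum_Icc_sub_mul_sub_eq {k m : ℕ} (hk : k ≤ m) :
    ∑ j ∈ Icc (k + 1) m, ((m : R) + 1 - j) * (f (j + 1) - f j) =
      ∑ j ∈ Icc (k + 1) (m + 1), f j - ((m : R) + 1 - k) * f (k + 1) := by
  induction hk using Nat.decreasingInduction with
  | self => simp
  | of_succ k hk ih =>
    rw [← insert_Icc_add_one_left_eq_Icc (by omega : k + 1 ≤ m),
      ← insert_Icc_add_one_left_eq_Icc (by omega : k + 1 ≤ m + 1),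
      sum_insert (by simp), sum_insert (by simp), ih]
    push_cast
    ring

end AbelSummation

theorem sum_Icc_add_sum_Icc {M : Type*} [AddCommMonoid M] (f : ℕ → M) {k m : ℕ} (hk : k ≤ m) :
    ∑ j ∈ Icc 1 k, f j + ∑ j ∈ Icc (k + 1) m, f j = ∑ j ∈ Icc 1 m, f j := by
  simp only [← Ico_add_one_right_eq_Icc]
  exact sum_Ico_consecutive f (by omega) (by omega)

theorem sum_Icc_sub_mul_le_sum_Icc_mul_iff {K : Type*} [Field K] [LinearOrder K]
    [IsStrictOrderedRing K] {V Δ : ℕ → K} {k m : ℕ}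
    (hΔ : ∀ j, 1 ≤ j → j ≤ m → Δ j = V (j + 1) - V j) (hk : k ≤ m) :
    ∑ j ∈ Icc (k + 1) m, ((m : K) + 1 - j) * Δ j ≤ ∑ j ∈ Icc 1 k, (j : K) * Δ j ↔
      (∑ j ∈ Icc 1 (m + 1), V j) / (m + 1) ≤ V (k + 1) := by
  have hΔ' : ∀ j ∈ Icc 1 m, Δ j = V (j + 1) - V j := fun j hj =>
    hΔ j (mem_Icc.1 hj).1 (mem_Icc.1 hj).2
  have hlow : ∑ j ∈ Icc 1 k, (j : K) * Δ j = k * V (k + 1) - ∑ j ∈ Icc 1 k, V j := by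
    rw [← sum_Icc_mul_sub_eq]
    exact sum_congr rfl fun j hj => by rw [hΔ' j (Icc_subset_Icc_right hk hj)]
  have hhigh : ∑ j ∈ Icc (k + 1) m, ((m : K) + 1 - j) * Δ j =
      ∑ j ∈ Icc (k + 1) (m + 1), V j - ((m : K) + 1 - k) * V (k + 1) := by
    rw [← sum_Icc_sub_mul_sub_eq _ hk]
    exact sum_congr rfl fun j hj => by rw [hΔ' j (Icc_subset_Icc_left (by omega) hj)]
  have hdiff : ∑ j ∈ Icc 1 k, (j : K) * Δ j - ∑ j ∈ Icc (k + 1) m, ((m : K) + 1 - j) * Δ j =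
      (m + 1) * V (k + 1) - ∑ j ∈ Icc 1 (m + 1), V j := by
    rw [hlow, hhigh, ← sum_Icc_add_sum_Icc V (by omega : k ≤ m + 1)]
    ring
  rw [div_le_iff₀ (by positivity), mul_comm, ← sub_nonneg, hdiff, sub_nonneg]

theorem card_filter_lt_eq_sInf {α : Type*} [LinearOrder α] {g : ℕ → α} {c : α} {m : ℕ}
    (hg : MonotoneOn g (Set.Iic m)) (hc : c ≤ g m) :
    #{k ∈ range (m + 1) | g k < c} = sInf {k | k ≤ m ∧ c ≤ g k} := by
  set s := sInf {k | k ≤ m ∧ c ≤ g k}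
  have hs : s ≤ m ∧ c ≤ g s := Nat.sInf_mem (s := {k | k ≤ m ∧ c ≤ g k}) ⟨m, le_rfl, hc⟩
  suffices {k ∈ range (m + 1) | g k < c} = range s by rw [this, card_range]
  ext k
  simp only [mem_filter, mem_range]
  constructor
  · rintro ⟨hkm, hk⟩
    by_contra! hsk
    exact (hs.2.trans (hg hs.1 (Nat.le_of_lt_succ hkm) hsk)).not_gt hk
  · intro hks
    refine ⟨by omega, lt_of_not_ge fun hk => ?_⟩
    exact hks.not_ge (Nat.sInf_le ⟨by omega, hk⟩)

theorem sum_univ_eq_sum_range_of_perm {M : Type*} [AddCommMonoid M] {n : ℕ} {U : Fin n → M}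
    {g : ℕ → M} (σ : Equiv.Perm (Fin n)) (h : ∀ i : Fin n, g i = U (σ i)) :
    ∑ i, U i = ∑ k ∈ range n, g k := by
  rw [← Equiv.sum_comp σ, ← Fin.sum_univ_eq_sum_range]
  exact sum_congr rfl fun i _ => (h i).symm

theorem sum_range_comp_succ_eq_sum_Icc {M : Type*} [AddCommMonoid M] (f : ℕ → M) (n : ℕ) :
    ∑ k ∈ range n, f (k + 1) = ∑ j ∈ Icc 1 n, f j := by
  rw [range_eq_Ico, sum_Ico_add', zero_add, Ico_add_one_right_eq_Icc]

theorem count_below_mean_eq_min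
    (n : ℕ) (hn : 1 ≤ n) (U : Fin n → ℝ) (V Δ : ℕ → ℝ)
    -- `V 1 ≤ V 2 ≤ ... ≤ V n` is the increasing rearrangement of `U`:
    (hmono : ∀ i j, 1 ≤ i → i ≤ j → j ≤ n → V i ≤ V j)
    (hperm : ∃ σ : Equiv.Perm (Fin n), ∀ i : Fin n, V ((i : ℕ) + 1) = U (σ i))
    -- the gaps `Δ_j = V_(j+1) - V_(j)` for `1 ≤ j ≤ n-1`:
    (hΔ : ∀ j, 1 ≤ j → j ≤ n - 1 → Δ j = V (j + 1) - V j) :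
    ((Finset.univ.filter (fun i : Fin n => U i < (∑ j, U j) / n)).card : ℕ) =
      sInf {k : ℕ | k ≤ n - 1 ∧
        ∑ j ∈ Finset.Icc (k + 1) (n - 1), ((n : ℝ) - j) * Δ j
          ≤ ∑ j ∈ Finset.Icc 1 k, (j : ℝ) * Δ j} := by
  obtain ⟨σ, hσ⟩ := hperm
  obtain ⟨m, rfl⟩ : ∃ m, n = m + 1 := ⟨n - 1, by omega⟩
  have hsum : ∑ j, U j = ∑ j ∈ Icc 1 (m + 1), V j := by
    rw [sum_univ_eq_sum_range_of_perm (g := fun k => V (k + 1)) σ hσ,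
      sum_range_comp_succ_eq_sum_Icc]
  have hmean : (∑ j, U j) / (m + 1 : ℕ) ≤ V (m + 1) := by
    rw [hsum, div_le_iff₀ (by positivity)]
    calc ∑ j ∈ Icc 1 (m + 1), V j ≤ #(Icc 1 (m + 1)) • V (m + 1) :=
          sum_le_card_nsmul _ _ _ fun j hj => hmono j _ (mem_Icc.1 hj).1 (mem_Icc.1 hj).2 le_rfl
      _ = V (m + 1) * (m + 1 : ℕ) := by simp [mul_comm]
  have hcount : #{i | U i < (∑ j, U j) / (m + 1 : ℕ)} =
      #{k ∈ range (m + 1) | V (k + 1) < (∑ j, U j) / (m + 1 : ℕ)} := by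
    simp only [card_filter]
    exact sum_univ_eq_sum_range_of_perm σ fun i => by rw [hσ]
  rw [hcount, card_filter_lt_eq_sInf (g := fun k => V (k + 1))
    (fun a _ b hb hab => hmono _ _ (by omega) (by omega) (by simp at hb; omega)) hmean]
  congr 1
  ext k
  simp only [Set.mem_ofPred_eq, add_tsub_cancel_right, hsum]
  refine and_congr_right fun hk => ?_
  push_cast
  exact (sum_Icc_sub_mul_le_sum_Icc_mul_iff (by simpa using hΔ) hk).symm
end

section
/- The function F(x) = (2/π) arctan( (x/(1−x))^{3/2} ) for 0 ≤ x ≤ 1 is a cumulative distribution function whose density is f(x) = (3/π) · √(x(1−x)) / (x³ + (1−x)³) on (0,1); i.e., F'(x) = f(x) for 0 < x < 1 and ∫_0^1 f(x) dx = 1. -/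
/-!
With `u = x / (1 - x)`, the distribution function is `(2/π) arctan (u ^ (3/2))`. The chain rule
gives its derivative, which becomes the stated density once `x = s²` and `1 - x = t²`. As `x`
increases from `0` to `1`, `u` increases from `0` to `∞`, so the distribution function runs from
`0` to `1`, and the improper form of the fundamental theorem of calculus gives total mass `1`.
-/

open Real Filter Set Topology

lemma cube_add_one_sub_cube_pos (x : ℝ) : 0 < x ^ 3 + (1 - x) ^ 3 := by
  nlinarith [sq_nonneg (2 * x - 1)]

lemma hasDerivAt_div_one_sub {x : ℝ} (hx : x ≠ 1) :
    HasDerivAt (fun y : ℝ => y / (1 - y)) (1 / (1 - x) ^ 2) x := by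
  have h := (hasDerivAt_id x).div ((hasDerivAt_id x).const_sub 1) (sub_ne_zero.mpr hx.symm)
  exact h.congr_deriv (by simp only [id]; ring)

lemma tendsto_div_one_sub_nhdsLT_one :
    Tendsto (fun y : ℝ => y / (1 - y)) (𝓝[<] 1) atTop := by
  have h_sub : Tendsto (fun y : ℝ => 1 - y) (𝓝[<] 1) (𝓝[>] 0) := by
    refine tendsto_nhdsWithin_of_tendsto_nhds_of_eventually_within _ ?_ ?_
    · exact tendsto_nhdsWithin_of_tendsto_nhds
        (by simpa using (continuous_sub_left (1 : ℝ)).tendsto 1)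
    · filter_upwards [self_mem_nhdsWithin] with y hy using sub_pos.mpr (mem_Iio.mp hy)
  have h_inv : Tendsto (fun y : ℝ => (1 - y)⁻¹) (𝓝[<] 1) atTop :=
    tendsto_inv_nhdsGT_zero.comp h_sub
  simpa only [id, div_eq_mul_inv] using
    (tendsto_nhdsWithin_of_tendsto_nhds tendsto_id).pos_mul_atTop one_pos h_inv

lemma tendsto_arctan_rpow_div_one_sub_nhdsGT_zero {p : ℝ} (hp : 0 < p) :
    Tendsto (fun y : ℝ => arctan ((y / (1 - y)) ^ p)) (𝓝[>] 0) (𝓝 0) := by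
  have h : ContinuousAt (fun y : ℝ => arctan ((y / (1 - y)) ^ p)) 0 :=
    continuous_arctan.continuousAt.comp <|
      (continuousAt_id.div (continuousAt_const.sub continuousAt_id) (by norm_num)).rpow_const
        (Or.inr hp.le)
  simpa [zero_rpow hp.ne'] using tendsto_nhdsWithin_of_tendsto_nhds h.tendsto

lemma tendsto_arctan_rpow_div_one_sub_nhdsLT_one {p : ℝ} (hp : 0 < p) :
    Tendsto (fun y : ℝ => arctan ((y / (1 - y)) ^ p)) (𝓝[<] 1) (𝓝 (π / 2)) :=
  (tendsto_nhds_of_tendsto_nhdsWithin tendsto_arctan_atTop).comp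
    ((tendsto_rpow_atTop hp).comp tendsto_div_one_sub_nhdsLT_one)

lemma hasDerivAt_arctan_rpow_three_halves_div_one_sub {x : ℝ} (hx0 : 0 < x) (hx1 : x < 1) :
    HasDerivAt (fun y : ℝ => arctan ((y / (1 - y)) ^ ((3 : ℝ) / 2)))
      (3 / 2 * (√(x * (1 - x)) / (x ^ 3 + (1 - x) ^ 3))) x := by
  have hu : 0 < x / (1 - x) := div_pos hx0 (sub_pos.mpr hx1)
  have h := (hasDerivAt_arctan _).comp x
    ((hasDerivAt_rpow_const (p := (3 : ℝ) / 2) (Or.inl hu.ne')).comp x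
      (hasDerivAt_div_one_sub hx1.ne))
  refine h.congr_deriv ?_
  -- with `x = s²` and `1 - x = t²`, every power and square root becomes rational in `s` and `t`
  obtain ⟨s, hs, rfl⟩ : ∃ s, 0 < s ∧ x = s ^ 2 :=
    ⟨√x, sqrt_pos.mpr hx0, (sq_sqrt hx0.le).symm⟩
  obtain ⟨t, ht, htx⟩ : ∃ t, 0 < t ∧ 1 - s ^ 2 = t ^ 2 :=
    ⟨√(1 - s ^ 2), sqrt_pos.mpr (by linarith), (sq_sqrt (by linarith)).symm⟩
  have h_ratio : s ^ 2 / t ^ 2 = (s / t) ^ 2 := by ring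
  have h_pow : ((s / t) ^ 2) ^ ((3 : ℝ) / 2) = (s / t) ^ 3 := by
    rw [← rpow_natCast, ← rpow_natCast, ← rpow_mul (by positivity)]; norm_num
  have h_pow_sub_one : ((s / t) ^ 2) ^ ((3 : ℝ) / 2 - 1) = s / t := by
    rw [← rpow_natCast, ← rpow_mul (by positivity)]; norm_num
  simp only [Function.comp, htx, h_ratio, h_pow, h_pow_sub_one,
    show s ^ 2 * t ^ 2 = (s * t) ^ 2 by ring, sqrt_sq (by positivity : 0 ≤ s * t)]
  field_simp
  ring

theorem limiting_distribution_density :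
    (∀ x : ℝ, 0 < x → x < 1 →
      HasDerivAt (fun y : ℝ => (2 / Real.pi) * Real.arctan ((y / (1 - y)) ^ ((3 : ℝ) / 2)))
        ((3 / Real.pi) * (Real.sqrt (x * (1 - x)) / (x ^ 3 + (1 - x) ^ 3))) x) ∧
    (∫ x in (0 : ℝ)..1,
        (3 / Real.pi) * (Real.sqrt (x * (1 - x)) / (x ^ 3 + (1 - x) ^ 3))) = 1 := by
  have h_deriv (x : ℝ) (hx0 : 0 < x) (hx1 : x < 1) :
      HasDerivAt (fun y : ℝ => (2 / π) * arctan ((y / (1 - y)) ^ ((3 : ℝ) / 2)))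
        ((3 / π) * (√(x * (1 - x)) / (x ^ 3 + (1 - x) ^ 3))) x :=
    ((hasDerivAt_arctan_rpow_three_halves_div_one_sub hx0 hx1).const_mul (2 / π)).congr_deriv
      (by ring)
  have h_cont :
      Continuous fun x : ℝ => (3 / π) * (√(x * (1 - x)) / (x ^ 3 + (1 - x) ^ 3)) := by
    fun_prop (disch := exact fun x => (cube_add_one_sub_cube_pos x).ne')
  have h_zero := (tendsto_arctan_rpow_div_one_sub_nhdsGT_zero
    (p := (3 : ℝ) / 2) (by norm_num)).const_mul (2 / π)
  have h_one := (tendsto_arctan_rpow_div_one_sub_nhdsLT_one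
    (p := (3 : ℝ) / 2) (by norm_num)).const_mul (2 / π)
  rw [mul_zero] at h_zero
  rw [show 2 / π * (π / 2) = 1 by field_simp] at h_one
  refine ⟨h_deriv, ?_⟩
  rw [intervalIntegral.integral_eq_sub_of_hasDerivAt_of_tendsto one_pos
    (fun x hx => h_deriv x hx.1 hx.2) (h_cont.intervalIntegrable 0 1) h_zero h_one]
  norm_num
end
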